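/- Let B be a closed geodesically convex set in the hyperbolic plane ℍ² and let u ∉ B. Define the penumbral cone C(u) = {v ∈ ℍ² : u lies on the geodesic segment from some point s ∈ B to v} (i.e., ∃ s ∈ B with d(s,u) + d(u,v) = d(s,v)). Then C(u) is geodesically convex: if v₁, v₂ ∈ C(u), then every point on the geodesic segment from v₁ to v₂ lies in C(u). -/

import Mathlib

open UpperHalfPlane

/-- `b` lies on the geodesic segment between `a` and `c` in the hyperbolic plane
(metric betweenness). -/
def HypBtw (a b c : ℍ) : Prop := dist a b + dist b c = dist a c

/-- A set in the hyperbolic plane is geodesically convex if it contains the geodesic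
segment between any two of its points. -/
def HypConvex (B : Set ℍ) : Prop :=
  ∀ a ∈ B, ∀ c ∈ B, ∀ b : ℍ, HypBtw a b c → b ∈ B

/-- The penumbral cone with apex `u` and light source `B`: the points `v` such that
`u` lies on the geodesic segment from some point `s ∈ B` to `v`. -/
def PenumbralCone (B : Set ℍ) (u : ℍ) : Set ℍ :=
  {v : ℍ | ∃ s ∈ B, HypBtw s u v}

/-!
In the Klein model the hyperbolic plane is the open unit disc and hyperbolic betweenness is
Euclidean betweenness, so geodesic convexity of a set is ordinary convexity of its image. The image
of the cone is then the disc intersected with `{v | ∃ s ∈ K, u ∈ [s, v]}` for a convex set `K`,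
and that set is convex in any vector space: if `vᵢ - u = τᵢ • (u - sᵢ)`, a convex combination `w`
of `v₁, v₂` satisfies `w - u = σ • (u - s)` for a convex combination `s` of `s₁, s₂`.

Betweenness in the Klein model is the equality case of the Cauchy–Schwarz inequality for the
Riemannian metric at the middle point.
-/

open Real RealInnerProductSpace

def penumbra (𝕜 : Type*) {E : Type*} [Semiring 𝕜] [PartialOrder 𝕜] [AddCommMonoid E]
    [SMul 𝕜 E] (K : Set E) (u : E) : Set E :=
  {v | ∃ s ∈ K, u ∈ segment 𝕜 s v}

section Penumbra

variable {𝕜 E : Type*} [Field 𝕜] [LinearOrder 𝕜] [IsStrictOrderedRing 𝕜]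
  [AddCommGroup E] [Module 𝕜 E]

theorem penumbra_eq_univ_of_mem {K : Set E} {u : E} (hu : u ∈ K) :
    penumbra 𝕜 K u = Set.univ :=
  Set.eq_univ_of_forall fun _ ↦ ⟨u, hu, left_mem_segment 𝕜 u _⟩

theorem Convex.penumbra {K : Set E} (hK : Convex 𝕜 K) (u : E) : Convex 𝕜 (penumbra 𝕜 K u) := by
  by_cases hu : u ∈ K
  · rw [penumbra_eq_univ_of_mem hu]
    exact convex_univ
  simp only [_root_.penumbra, mem_segment_iff_sameRay]
  rintro v₁ ⟨s₁, hs₁, hray₁⟩ v₂ ⟨s₂, hs₂, hray₂⟩ a b ha hb hab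
  obtain ⟨τ₁, hτ₁, e₁⟩ := hray₁.exists_nonneg_left (sub_ne_zero.2 fun h ↦ hu (h ▸ hs₁))
  obtain ⟨τ₂, hτ₂, e₂⟩ := hray₂.exists_nonneg_left (sub_ne_zero.2 fun h ↦ hu (h ▸ hs₂))
  have hw : a • v₁ + b • v₂ - u = (a * τ₁) • (u - s₁) + (b * τ₂) • (u - s₂) := by
    rw [mul_smul, mul_smul, e₁, e₂]
    linear_combination (norm := module) hab • u
  obtain hσ | hσ := (add_nonneg (mul_nonneg ha hτ₁) (mul_nonneg hb hτ₂)).eq_or_lt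
  · obtain ⟨hz₁, hz₂⟩ :=
      (add_eq_zero_iff_of_nonneg (mul_nonneg ha hτ₁) (mul_nonneg hb hτ₂)).1 hσ.symm
    refine ⟨s₁, hs₁, ?_⟩
    rw [hw, hz₁, hz₂, zero_smul, zero_smul, add_zero]
    exact SameRay.zero_right _
  · set σ := a * τ₁ + b * τ₂
    set s := (a * τ₁ / σ) • s₁ + (b * τ₂ / σ) • s₂
    have hs : s ∈ K :=
      hK hs₁ hs₂ (by positivity) (by positivity) (by rw [← add_div, div_self hσ.ne'])
    have hσs : a • v₁ + b • v₂ - u = σ • (u - s) := by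
      rw [hw, smul_sub σ, smul_add, smul_smul, smul_smul, mul_div_cancel₀ _ hσ.ne',
        mul_div_cancel₀ _ hσ.ne']
      module
    exact ⟨s, hs, hσs ▸ SameRay.sameRay_nonneg_smul_right _ hσ.le⟩

end Penumbra

theorem sqrt_one_sub_norm_sq_pos {F : Type*} [SeminormedAddCommGroup F] {x : F} (hx : ‖x‖ < 1) :
    0 < √(1 - ‖x‖ ^ 2) :=
  sqrt_pos.2 (by nlinarith [norm_nonneg x])

section KleinBall

variable {E : Type*} [NormedAddCommGroup E] [InnerProductSpace ℝ E]

/-- `kleinMetric m / (1 - ‖m‖ ^ 2) ^ 2` is the Riemannian metric of the Klein model at `m`. -/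
def kleinMetric (m x y : E) : ℝ := (1 - ‖m‖ ^ 2) * ⟪x, y⟫ + ⟪x, m⟫ * ⟪y, m⟫

noncomputable def kleinMetricSqrt (m : E) : E →ₗ[ℝ] E :=
  √(1 - ‖m‖ ^ 2) • LinearMap.id + (1 + √(1 - ‖m‖ ^ 2))⁻¹ • (innerₛₗ ℝ m).smulRight m

theorem inner_kleinMetricSqrt {m : E} (hm : ‖m‖ ≤ 1) (x y : E) :
    ⟪kleinMetricSqrt m x, kleinMetricSqrt m y⟫ = kleinMetric m x y := by
  simp only [kleinMetricSqrt, kleinMetric, LinearMap.add_apply, LinearMap.smul_apply,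
    LinearMap.id_apply, LinearMap.smulRight_apply, innerₛₗ_apply_apply, inner_add_left,
    inner_add_right, inner_smul_left, inner_smul_right, real_inner_self_eq_norm_sq,
    RCLike.conj_to_real, real_inner_comm m x, real_inner_comm m y]
  have hm2 : ‖m‖ ^ 2 = 1 - √(1 - ‖m‖ ^ 2) ^ 2 := by
    rw [sq_sqrt (by nlinarith [norm_nonneg m])]; ring
  set r := √(1 - ‖m‖ ^ 2)
  have hr : 0 ≤ r := sqrt_nonneg _
  rw [hm2]
  field_simp
  ring

theorem kleinMetricSqrt_injective {m : E} (hm : ‖m‖ < 1) :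
    Function.Injective (kleinMetricSqrt m) := by
  rw [← LinearMap.ker_eq_bot, LinearMap.ker_eq_bot']
  intro x hx
  have h := inner_kleinMetricSqrt hm.le x x
  rw [hx, inner_zero_left, kleinMetric, real_inner_self_eq_norm_sq] at h
  have hr : 0 < 1 - ‖m‖ ^ 2 := by nlinarith [norm_nonneg m]
  have : ‖x‖ ^ 2 = 0 := by nlinarith [sq_nonneg ⟪x, m⟫, sq_nonneg ‖x‖]
  simpa using this

theorem sameRay_iff_kleinMetric {m : E} (hm : ‖m‖ < 1) {x y : E} :
    SameRay ℝ x y ↔ kleinMetric m x y = √(kleinMetric m x x) * √(kleinMetric m y y) := by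
  rw [← (kleinMetricSqrt_injective hm).sameRay_map_iff, sameRay_iff_norm_smul_eq, eq_comm,
    ← inner_eq_norm_mul_iff_real, norm_eq_sqrt_real_inner, norm_eq_sqrt_real_inner,
    inner_kleinMetricSqrt hm.le, inner_kleinMetricSqrt hm.le, inner_kleinMetricSqrt hm.le]

theorem kleinMetric_sub_sub (p m q : E) :
    kleinMetric m (m - p) (q - m) =
      (1 - ⟪p, q⟫) * (1 - ‖m‖ ^ 2) - (1 - ⟪p, m⟫) * (1 - ⟪m, q⟫) := by
  simp only [kleinMetric, inner_sub_left, inner_sub_right, real_inner_self_eq_norm_sq,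
    real_inner_comm m q]
  ring

theorem kleinMetric_sub_sub_left (x y : E) :
    kleinMetric x (y - x) (y - x) = (1 - ⟪x, y⟫) ^ 2 - (1 - ‖x‖ ^ 2) * (1 - ‖y‖ ^ 2) := by
  simp only [kleinMetric, inner_sub_left, inner_sub_right, real_inner_self_eq_norm_sq,
    real_inner_comm x y]
  ring

theorem kleinMetric_sub_sub_right (x y : E) :
    kleinMetric y (y - x) (y - x) = (1 - ⟪x, y⟫) ^ 2 - (1 - ‖x‖ ^ 2) * (1 - ‖y‖ ^ 2) := by
  simp only [kleinMetric, inner_sub_left, inner_sub_right, real_inner_self_eq_norm_sq,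
    real_inner_comm x y]
  ring

theorem kleinMetric_self_nonneg {m : E} (hm : ‖m‖ ≤ 1) (x : E) : 0 ≤ kleinMetric m x x :=
  inner_kleinMetricSqrt hm x x ▸ real_inner_self_nonneg

noncomputable def kleinCosh (x y : E) : ℝ :=
  (1 - ⟪x, y⟫) / (√(1 - ‖x‖ ^ 2) * √(1 - ‖y‖ ^ 2))

noncomputable def kleinDist (x y : E) : ℝ := arcosh (kleinCosh x y)

variable {x y : E}

theorem kleinCosh_mul (hx : ‖x‖ < 1) (hy : ‖y‖ < 1) :
    kleinCosh x y * (√(1 - ‖x‖ ^ 2) * √(1 - ‖y‖ ^ 2)) = 1 - ⟪x, y⟫ :=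
  div_mul_cancel₀ _ (mul_pos (sqrt_one_sub_norm_sq_pos hx) (sqrt_one_sub_norm_sq_pos hy)).ne'

theorem kleinCosh_self (hx : ‖x‖ < 1) : kleinCosh x x = 1 := by
  rw [kleinCosh, real_inner_self_eq_norm_sq, mul_self_sqrt (by nlinarith [norm_nonneg x]),
    div_self (by nlinarith [norm_nonneg x])]

theorem kleinDist_self (hx : ‖x‖ < 1) : kleinDist x x = 0 := by
  rw [kleinDist, kleinCosh_self hx, arcosh_zero]

theorem one_le_kleinCosh (hx : ‖x‖ < 1) (hy : ‖y‖ < 1) : 1 ≤ kleinCosh x y := by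
  have hs := mul_pos (sqrt_one_sub_norm_sq_pos hx) (sqrt_one_sub_norm_sq_pos hy)
  rw [kleinCosh, one_le_div hs, ← sqrt_mul (by nlinarith [norm_nonneg x])]
  refine sqrt_le_iff.2 ⟨?_, ?_⟩
  · linarith [real_inner_le_norm x y, mul_lt_one_of_nonneg_of_lt_one_left (norm_nonneg x) hx hy.le]
  · linarith [kleinMetric_sub_sub_left x y ▸ kleinMetric_self_nonneg hx.le (y - x)]

theorem kleinDist_nonneg (hx : ‖x‖ < 1) (hy : ‖y‖ < 1) : 0 ≤ kleinDist x y :=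
  arcosh_nonneg (one_le_kleinCosh hx hy)

theorem cosh_kleinDist (hx : ‖x‖ < 1) (hy : ‖y‖ < 1) : cosh (kleinDist x y) = kleinCosh x y :=
  cosh_arcosh (one_le_kleinCosh hx hy)

theorem sinh_kleinDist (hx : ‖x‖ < 1) (hy : ‖y‖ < 1) :
    sinh (kleinDist x y) = √(kleinCosh x y ^ 2 - 1) :=
  sinh_arcosh (one_le_kleinCosh hx hy)

theorem sqrt_kleinCosh_sq_sub_one_mul (hx : ‖x‖ < 1) (hy : ‖y‖ < 1) :
    √(kleinCosh x y ^ 2 - 1) * (√(1 - ‖x‖ ^ 2) * √(1 - ‖y‖ ^ 2)) =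
      √((1 - ⟪x, y⟫) ^ 2 - (1 - ‖x‖ ^ 2) * (1 - ‖y‖ ^ 2)) := by
  have hs := mul_pos (sqrt_one_sub_norm_sq_pos hx) (sqrt_one_sub_norm_sq_pos hy)
  rw [← sqrt_sq hs.le, ← sqrt_mul (by nlinarith [one_le_kleinCosh hx hy]), sub_mul, one_mul,
    ← mul_pow, kleinCosh_mul hx hy, mul_pow, sq_sqrt (by nlinarith [norm_nonneg x]),
    sq_sqrt (by nlinarith [norm_nonneg y])]

theorem mem_segment_iff_kleinDist_add {p m q : E} (hp : ‖p‖ < 1) (hm : ‖m‖ < 1) (hq : ‖q‖ < 1) :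
    m ∈ segment ℝ p q ↔ kleinDist p m + kleinDist m q = kleinDist p q := by
  have hscale := mul_pos (mul_pos (sqrt_one_sub_norm_sq_pos hp) (sqrt_one_sub_norm_sq_pos hm))
    (mul_pos (sqrt_one_sub_norm_sq_pos hm) (sqrt_one_sub_norm_sq_pos hq))
  rw [mem_segment_iff_sameRay, sameRay_iff_kleinMetric hm, kleinMetric_sub_sub,
    kleinMetric_sub_sub_right, kleinMetric_sub_sub_left,
    ← cosh_injOn.eq_iff (add_nonneg (kleinDist_nonneg hp hm) (kleinDist_nonneg hm hq))
      (kleinDist_nonneg hp hq),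
    cosh_add, cosh_kleinDist hp hm, cosh_kleinDist hm hq, cosh_kleinDist hp hq,
    sinh_kleinDist hp hm, sinh_kleinDist hm hq]
  have hcc : kleinCosh p m * kleinCosh m q *
      (√(1 - ‖p‖ ^ 2) * √(1 - ‖m‖ ^ 2) * (√(1 - ‖m‖ ^ 2) * √(1 - ‖q‖ ^ 2))) =
      (1 - ⟪p, m⟫) * (1 - ⟪m, q⟫) := by
    rw [← kleinCosh_mul hp hm, ← kleinCosh_mul hm hq]; ring
  have hss : √(kleinCosh p m ^ 2 - 1) * √(kleinCosh m q ^ 2 - 1) *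
      (√(1 - ‖p‖ ^ 2) * √(1 - ‖m‖ ^ 2) * (√(1 - ‖m‖ ^ 2) * √(1 - ‖q‖ ^ 2))) =
      √((1 - ⟪p, m⟫) ^ 2 - (1 - ‖p‖ ^ 2) * (1 - ‖m‖ ^ 2)) *
        √((1 - ⟪m, q⟫) ^ 2 - (1 - ‖m‖ ^ 2) * (1 - ‖q‖ ^ 2)) := by
    rw [← sqrt_kleinCosh_sq_sub_one_mul hp hm, ← sqrt_kleinCosh_sq_sub_one_mul hm hq]; ring
  have hc : kleinCosh p q *
      (√(1 - ‖p‖ ^ 2) * √(1 - ‖m‖ ^ 2) * (√(1 - ‖m‖ ^ 2) * √(1 - ‖q‖ ^ 2))) =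
      (1 - ⟪p, q⟫) * (1 - ‖m‖ ^ 2) := by
    linear_combination √(1 - ‖m‖ ^ 2) ^ 2 * kleinCosh_mul hp hq +
      (1 - ⟪p, q⟫) * sq_sqrt (by nlinarith [norm_nonneg m] : 0 ≤ 1 - ‖m‖ ^ 2)
  -- multiplied by the conformal factors, `cosh (d(p,m) + d(m,q)) = cosh d(p,q)` becomes the
  -- equality case of Cauchy–Schwarz for `kleinMetric m`
  rw [iff_comm, ← mul_left_inj' hscale.ne', add_mul, hcc, hss, hc]
  constructor <;> intro h <;> linarith

end KleinBall

namespace UpperHalfPlane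

/-- The Cayley transform onto the Poincaré disc, then `w ↦ 2 w / (1 + |w|²)` onto the Klein disc,
then multiplication by `I`. -/
noncomputable def toKlein (z : ℍ) : ℂ :=
  ⟨2 * z.re / (z.re ^ 2 + z.im ^ 2 + 1), (z.re ^ 2 + z.im ^ 2 - 1) / (z.re ^ 2 + z.im ^ 2 + 1)⟩

theorem one_sub_norm_toKlein_sq (z : ℍ) :
    1 - ‖toKlein z‖ ^ 2 = (2 * z.im / (z.re ^ 2 + z.im ^ 2 + 1)) ^ 2 := by
  rw [Complex.sq_norm, Complex.normSq_apply, toKlein]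
  field_simp
  ring

theorem sqrt_one_sub_norm_toKlein_sq (z : ℍ) :
    √(1 - ‖toKlein z‖ ^ 2) = 2 * z.im / (z.re ^ 2 + z.im ^ 2 + 1) := by
  rw [one_sub_norm_toKlein_sq, sqrt_sq (by have := z.im_pos; positivity)]

theorem norm_toKlein_lt_one (z : ℍ) : ‖toKlein z‖ < 1 := by
  have := z.im_pos
  have : 0 < 1 - ‖toKlein z‖ ^ 2 := by rw [one_sub_norm_toKlein_sq]; positivity
  nlinarith [norm_nonneg (toKlein z)]

theorem cosh_dist_eq_kleinCosh (z w : ℍ) :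
    cosh (dist z w) = kleinCosh (toKlein z) (toKlein w) := by
  have := z.im_pos
  have := w.im_pos
  rw [kleinCosh, sqrt_one_sub_norm_toKlein_sq, sqrt_one_sub_norm_toKlein_sq, cosh_dist',
    Complex.inner]
  simp only [toKlein, Complex.mul_re, Complex.conj_re, Complex.conj_im]
  field_simp
  ring

theorem dist_eq_kleinDist (z w : ℍ) : dist z w = kleinDist (toKlein z) (toKlein w) := by
  rw [kleinDist, ← cosh_dist_eq_kleinCosh, arcosh_cosh dist_nonneg]

theorem toKlein_injective : Function.Injective toKlein := fun z w h ↦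
  dist_eq_zero.1 <| by rw [dist_eq_kleinDist, h, kleinDist_self (norm_toKlein_lt_one w)]

theorem range_toKlein : Set.range toKlein = Metric.ball 0 1 := by
  refine subset_antisymm
    (Set.range_subset_iff.2 fun z ↦ mem_ball_zero_iff.2 (norm_toKlein_lt_one z)) fun k hk ↦ ?_
  rw [mem_ball_zero_iff] at hk
  have him : 0 < 1 - k.im := by linarith [(abs_le.1 (Complex.abs_im_le_norm k)).2]
  have hy : 0 < √(1 - ‖k‖ ^ 2) := sqrt_one_sub_norm_sq_pos hk
  have hy2 : √(1 - ‖k‖ ^ 2) ^ 2 = 1 - k.re ^ 2 - k.im ^ 2 := by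
    rw [sq_sqrt (by nlinarith [norm_nonneg k]), Complex.sq_norm, Complex.normSq_apply]
    ring
  refine ⟨UpperHalfPlane.mk ⟨k.re / (1 - k.im), √(1 - ‖k‖ ^ 2) / (1 - k.im)⟩ (div_pos hy him), ?_⟩
  apply Complex.ext <;> simp only [toKlein, UpperHalfPlane.mk_re, UpperHalfPlane.mk_im]
  all_goals
    field_simp
    rw [hy2]
    ring

theorem hypBtw_iff_mem_segment (a b c : ℍ) :
    HypBtw a b c ↔ toKlein b ∈ segment ℝ (toKlein a) (toKlein c) := by
  rw [HypBtw, dist_eq_kleinDist, dist_eq_kleinDist, dist_eq_kleinDist,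
    mem_segment_iff_kleinDist_add (norm_toKlein_lt_one a) (norm_toKlein_lt_one b)
      (norm_toKlein_lt_one c)]

theorem hypConvex_iff_convex_image {B : Set ℍ} : HypConvex B ↔ Convex ℝ (toKlein '' B) := by
  rw [convex_iff_segment_subset]
  constructor
  · rintro hB _ ⟨a, ha, rfl⟩ _ ⟨c, hc, rfl⟩ k hk
    have hk_ball : k ∈ Metric.ball (0 : ℂ) 1 := (convex_ball 0 1).segment_subset
      (range_toKlein ▸ Set.mem_range_self a) (range_toKlein ▸ Set.mem_range_self c) hk
    obtain ⟨b, rfl⟩ := range_toKlein.symm ▸ hk_ball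
    exact ⟨b, hB a ha c hc b ((hypBtw_iff_mem_segment a b c).2 hk), rfl⟩
  · intro hK a ha c hc b hb
    obtain ⟨b', hb', e⟩ := hK ⟨a, ha, rfl⟩ ⟨c, hc, rfl⟩ ((hypBtw_iff_mem_segment a b c).1 hb)
    exact toKlein_injective e ▸ hb'

theorem toKlein_image_penumbralCone (B : Set ℍ) (u : ℍ) :
    toKlein '' PenumbralCone B u = penumbra ℝ (toKlein '' B) (toKlein u) ∩ Metric.ball 0 1 := by
  ext k
  constructor
  · rintro ⟨v, ⟨s, hs, hsuv⟩, rfl⟩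
    exact ⟨⟨toKlein s, ⟨s, hs, rfl⟩, (hypBtw_iff_mem_segment s u v).1 hsuv⟩,
      range_toKlein ▸ Set.mem_range_self v⟩
  · rintro ⟨⟨_, ⟨s, hs, rfl⟩, hk⟩, hk_ball⟩
    obtain ⟨v, rfl⟩ := range_toKlein.symm ▸ hk_ball
    exact ⟨v, ⟨s, hs, (hypBtw_iff_mem_segment s u v).2 hk⟩, rfl⟩

end UpperHalfPlane

theorem penumbralCone_convex (B : Set ℍ) (hBconv : HypConvex B)
    (u : ℍ) : HypConvex (PenumbralCone B u) := by
  rw [hypConvex_iff_convex_image] at hBconv ⊢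
  rw [toKlein_image_penumbralCone]
  exact (hBconv.penumbra (toKlein u)).inter (convex_ball 0 1)
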